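/- The one-sided Mahavier dynamical system (I_{F_{1/2,3,1}}^+, σ^+_{F_{1/2,3,1}}) does not have the shadowing property. -/
import Mathlib


open Set Filter Topology

/-- One-sided Mahavier product of a relation `F` on `X`. -/
def MahavierPlus {X : Type*} (F : Set (X × X)) : Set (ℕ → X) :=
  {x | ∀ n : ℕ, (x n, x (n + 1)) ∈ F}

/-- Two-sided Mahavier product of a relation `F` on `X`. -/
def MahavierTwo {X : Type*} (F : Set (X × X)) : Set (ℤ → X) :=
  {x | ∀ n : ℤ, (x n, x (n + 1)) ∈ F}

/-- The shift map on the one-sided Mahavier product. -/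
def shiftPlus {X : Type*} (F : Set (X × X)) (x : MahavierPlus F) : MahavierPlus F :=
  ⟨fun n => (x : ℕ → X) (n + 1), fun n => x.2 (n + 1)⟩

/-- The shift map on the two-sided Mahavier product. -/
def shiftTwo {X : Type*} (F : Set (X × X)) (x : MahavierTwo F) : MahavierTwo F :=
  ⟨fun n => (x : ℤ → X) (n + 1), fun n => x.2 (n + 1)⟩

/-- The metric `D(x,y) = sup_{n ≥ 1} d(x_n, y_n)/2^n` on one-sided sequences
(coordinates are indexed from `0` here, so the weight is `2^(n+1)`). -/
noncomputable def DPlus {X : Type*} [PseudoMetricSpace X] (x y : ℕ → X) : ℝ :=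
  ⨆ n : ℕ, dist (x n) (y n) / 2 ^ (n + 1)

/-- The metric `D(x,y) = sup_{n ∈ ℤ} d(x_n, y_n)/2^{|n|}` on two-sided sequences. -/
noncomputable def DTwo {X : Type*} [PseudoMetricSpace X] (x y : ℤ → X) : ℝ :=
  ⨆ n : ℤ, dist (x n) (y n) / 2 ^ n.natAbs

/-- Topological transitivity. -/
def TopTransitive {Y : Type*} [TopologicalSpace Y] (f : Y → Y) : Prop :=
  ∀ U V : Set Y, IsOpen U → IsOpen V → U.Nonempty → V.Nonempty →
    ∃ n : ℕ, (f^[n] '' U ∩ V).Nonempty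

/-- Topological mixing. -/
def TopMixing {Y : Type*} [TopologicalSpace Y] (f : Y → Y) : Prop :=
  ∀ U V : Set Y, IsOpen U → IsOpen V → U.Nonempty → V.Nonempty →
    ∃ n₀ : ℕ, ∀ n : ℕ, n₀ ≤ n → (f^[n] '' U ∩ V).Nonempty

/-- The shadowing property for a map `f` with respect to a distance `dY`. -/
def ShadowingProp {Y : Type*} (dY : Y → Y → ℝ) (f : Y → Y) : Prop :=
  ∀ ε : ℝ, 0 < ε → ∃ δ : ℝ, 0 < δ ∧ ∀ x : ℕ → Y,
    (∀ k : ℕ, dY (f (x k)) (x (k + 1)) < δ) →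
    ∃ y : Y, ∀ k : ℕ, dY (f^[k] y) (x k) < ε

/-- The specification property for a map `f` with respect to a distance `dY`. -/
def SpecProp {Y : Type*} (dY : Y → Y → ℝ) (f : Y → Y) : Prop :=
  ∀ ε : ℝ, 0 < ε → ∃ N : ℕ, 0 < N ∧ ∀ n : ℕ, 0 < n →
    ∀ x : Fin n → Y, ∀ k l : Fin n → ℕ,
      (∀ i, k i ≤ l i) →
      (∀ i j : Fin n, (i : ℕ) + 1 = (j : ℕ) → l i + N ≤ k j) →
      ∃ y : Y, ∀ i : Fin n, ∀ m : ℕ, k i ≤ m → m ≤ l i →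
        dY (f^[m] y) (f^[m] (x i)) ≤ ε

/-- The CR-specification property for the one-sided Mahavier product of `F`. -/
def CRSpec {X : Type*} [PseudoMetricSpace X] (F : Set (X × X)) : Prop :=
  ∀ ε : ℝ, 0 < ε → ∃ N : ℕ, 0 < N ∧ ∀ n : ℕ, 0 < n →
    ∀ x : Fin n → MahavierPlus F, ∀ k l : Fin n → ℕ,
      (∀ i, k i ≤ l i) →
      (∀ i j : Fin n, (i : ℕ) + 1 = (j : ℕ) → l i + N ≤ k j) →
      ∃ y : MahavierPlus F, ∀ i : Fin n, ∀ m : ℕ, k i ≤ m → m ≤ l i →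
        dist ((x i : ℕ → X) m) ((y : ℕ → X) m) ≤ ε

/-- The image of a set under a relation. -/
def relImage {X : Type*} (F : Set (X × X)) (A : Set X) : Set X :=
  {y | ∃ a ∈ A, (a, y) ∈ F}

/-- Composition of relations. -/
def relComp {X : Type*} (F G : Set (X × X)) : Set (X × X) :=
  {p | ∃ z : X, (p.1, z) ∈ F ∧ (z, p.2) ∈ G}

/-- Iterated composition `F^n` of a relation with itself. -/
def relPow {X : Type*} (F : Set (X × X)) : ℕ → Set (X × X)
  | 0 => {p | p.1 = p.2}
  | n + 1 => relComp (relPow F n) F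

/-- The relation `F_{1/2,3,1} = {(x,3x) : 0 ≤ x ≤ 1/3} ∪ {(x,x/2) : 0 ≤ x ≤ 1} ∪ {(x,x) : 0 ≤ x ≤ 1}`
on `I = [0,1]`. -/
def F231 : Set (ℝ × ℝ) :=
  {p | (p.1 ∈ Set.Icc (0 : ℝ) (1 / 3) ∧ p.2 = 3 * p.1) ∨
       (p.1 ∈ Set.Icc (0 : ℝ) 1 ∧ p.2 = p.1 / 2) ∨
       (p.1 ∈ Set.Icc (0 : ℝ) 1 ∧ p.2 = p.1)}

lemma F231_mem_Icc {a b : ℝ} (h : (a, b) ∈ F231) :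
    0 ≤ a ∧ a ≤ 1 ∧ 0 ≤ b ∧ b ≤ 1 := by
  rcases h with ⟨⟨h1, h2⟩, h3⟩ | ⟨⟨h1, h2⟩, h3⟩ | ⟨⟨h1, h2⟩, h3⟩ <;>
    simp only [Prod.fst, Prod.snd] at h1 h2 h3 <;>
    exact ⟨by linarith, by linarith, by rw [h3]; linarith, by rw [h3]; linarith⟩

lemma shift_iter (y : MahavierPlus F231) (k n : ℕ) :
    (((shiftPlus F231)^[k] y) : ℕ → ℝ) n = (y : ℕ → ℝ) (n + k) := by
  induction k generalizing n with
  | zero => simp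
  | succ k ih =>
    rw [Function.iterate_succ_apply']
    show (((shiftPlus F231)^[k] y) : ℕ → ℝ) (n + 1) = _
    have hnk : n + 1 + k = n + (k + 1) := by omega
    rw [ih, hnk]

lemma two_le_pow (n : ℕ) : (2:ℝ) ≤ 2 ^ (n + 1) := by
  calc (2:ℝ) = 2 ^ 1 := by norm_num
  _ ≤ 2 ^ (n + 1) := by
    apply pow_le_pow_right₀ <;> [norm_num; omega]

/-- The one-sided Mahavier system of `F_{1/2,3,1}` does not have the
shadowing property. -/
theorem stmt12 :
    ¬ ShadowingProp (fun a b : MahavierPlus F231 => DPlus (a : ℕ → ℝ) (b : ℕ → ℝ))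
        (shiftPlus F231) := by
  intro hsh
  obtain ⟨δ, hδ, hmain⟩ := hsh (1/20) (by norm_num)
  set s : ℝ := min δ (1/10) with hs
  have hs0 : 0 < s := lt_min hδ (by norm_num)
  have hs1 : s ≤ 1/10 := min_le_right _ _
  have hsδ : s ≤ δ := min_le_left _ _
  set c : ℕ → ℝ := fun k => min ((k : ℝ) * s) 1 with hc
  have hc01 : ∀ k, 0 ≤ c k ∧ c k ≤ 1 := fun k =>
    ⟨le_min (by positivity) (by norm_num), min_le_right _ _⟩
  have hcstep : ∀ k, dist (c k) (c (k+1)) ≤ s := by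
    intro k
    have hA : c k ≤ c (k+1) := by
      apply min_le_min _ le_rfl
      push_cast
      nlinarith
    have hB : c (k+1) ≤ c k + s := by
      rcases le_total ((k:ℝ) * s) 1 with h | h
      · have h1 : c k = (k:ℝ) * s := min_eq_left h
        have h2 : c (k+1) ≤ ((k:ℝ)+1) * s := by
          have := min_le_left (((k:ℕ)+1 : ℕ) : ℝ) 1
          calc c (k+1) ≤ (((k+1:ℕ)) : ℝ) * s := min_le_left _ _
            _ = ((k:ℝ)+1) * s := by push_cast; ring
        rw [h1]; nlinarith
      · have h1 : c k = 1 := min_eq_right h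
        have h2 : c (k+1) ≤ 1 := min_le_right _ _
        rw [h1]; linarith
    rw [Real.dist_eq, abs_le]
    constructor <;> linarith
  have hmem : ∀ k, (fun _ : ℕ => c k) ∈ MahavierPlus F231 := by
    intro k n
    exact Or.inr (Or.inr ⟨⟨(hc01 k).1, (hc01 k).2⟩, rfl⟩)
  set x : ℕ → MahavierPlus F231 := fun k => ⟨fun _ => c k, hmem k⟩ with hx
  have hpseudo : ∀ k : ℕ,
      (fun a b : MahavierPlus F231 => DPlus (a : ℕ → ℝ) (b : ℕ → ℝ))
        (shiftPlus F231 (x k)) (x (k+1)) < δ := by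
    intro k
    have hle : DPlus ((shiftPlus F231 (x k) : MahavierPlus F231) : ℕ → ℝ)
        ((x (k+1) : MahavierPlus F231) : ℕ → ℝ) ≤ s / 2 := by
      apply ciSup_le
      intro n
      show dist (c k) (c (k+1)) / 2 ^ (n + 1) ≤ s / 2
      apply div_le_div₀ hs0.le (hcstep k) two_pos (two_le_pow n)
    calc DPlus _ _ ≤ s / 2 := hle
      _ < δ := by linarith
  obtain ⟨y, hy⟩ := hmain x hpseudo
  have hyIcc : ∀ m, 0 ≤ (y : ℕ → ℝ) m ∧ (y : ℕ → ℝ) m ≤ 1 := by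
    intro m
    have := F231_mem_Icc (y.2 m)
    exact ⟨this.1, this.2.1⟩
  have hkey : ∀ k, |(y : ℕ → ℝ) k - c k| < 1/10 := by
    intro k
    have hbdd : BddAbove (Set.range fun n : ℕ =>
        dist ((((shiftPlus F231)^[k] y) : ℕ → ℝ) n) (((x k : MahavierPlus F231) : ℕ → ℝ) n)
          / 2 ^ (n + 1)) := by
      refine ⟨1/2, ?_⟩
      rintro _ ⟨n, rfl⟩
      have h1 : dist ((((shiftPlus F231)^[k] y) : ℕ → ℝ) n)
          (((x k : MahavierPlus F231) : ℕ → ℝ) n) ≤ 1 := by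
        rw [shift_iter]
        show dist ((y : ℕ → ℝ) (n + k)) (c k) ≤ 1
        rw [Real.dist_eq, abs_le]
        have := hyIcc (n + k); have := hc01 k
        constructor <;> linarith [(hyIcc (n+k)).1, (hyIcc (n+k)).2, (hc01 k).1, (hc01 k).2]
      calc _ ≤ (1:ℝ) / 2 ^ (n+1) := by
            apply div_le_div₀ (by norm_num) h1 (by positivity) le_rfl
        _ ≤ 1/2 := by
            apply div_le_div₀ (by norm_num) le_rfl two_pos (two_le_pow n)
    have h0 := le_ciSup hbdd 0
    have h2 : dist ((((shiftPlus F231)^[k] y) : ℕ → ℝ) 0)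
        (((x k : MahavierPlus F231) : ℕ → ℝ) 0) / 2 ^ (0 + 1)
        = |(y : ℕ → ℝ) k - c k| / 2 := by
      rw [shift_iter]
      show dist ((y : ℕ → ℝ) (0 + k)) (c k) / 2 ^ 1 = _
      rw [Real.dist_eq]
      norm_num
    rw [h2] at h0
    have hlt := hy k
    have : DPlus ((((shiftPlus F231)^[k] y) : MahavierPlus F231) : ℕ → ℝ)
        ((x k : MahavierPlus F231) : ℕ → ℝ) < 1/20 := hlt
    have hsup : |(y : ℕ → ℝ) k - c k| / 2 < 1/20 := lt_of_le_of_lt h0 this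
    linarith
  have hhalf : ∀ k, (y : ℕ → ℝ) k < 1/2 := by
    intro k
    induction k with
    | zero =>
      have h0 := hkey 0
      have hc0 : c 0 = 0 := by simp [hc]
      rw [hc0] at h0
      have := abs_lt.mp h0
      linarith [this.2]
    | succ k ih =>
      rcases y.2 k with ⟨⟨h1, h2⟩, h3⟩ | ⟨⟨h1, h2⟩, h3⟩ | ⟨⟨h1, h2⟩, h3⟩ <;>
        simp only [Prod.fst, Prod.snd] at h1 h2 h3
      · -- tripling step
        have hk := abs_lt.mp (hkey k)
        have hk1 := abs_lt.mp (hkey (k+1))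
        have hst := abs_le.mp ((Real.dist_eq (c k) (c (k+1)) ▸ hcstep k))
        rw [h3] at hk1 ⊢
        -- hk1 : |3 y_k - c(k+1)| bounds, etc.
        linarith [hk.1, hk.2, hk1.1, hk1.2, hst.1, hst.2, hs1]
      · rw [h3]; linarith
      · rw [h3]; exact ih
  obtain ⟨K, hK⟩ := exists_nat_ge (1 / s)
  have hcK : c K = 1 := by
    apply min_eq_right
    rw [div_le_iff₀ hs0] at hK
    linarith
  have hfin := abs_lt.mp (hkey K)
  rw [hcK] at hfin
  linarith [hfin.1, hhalf K]
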